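/- Bad-event estimate for the Feynman–Kac semigroup along the coupled chain: Assume hypothesis (C) with constants q ∈ [0,1), C > 0, let V : X → ℝ be continuous, and fix x, x' ∈ X. Then for every continuous f : X → ℝ, every n ≥ 1 and every 0 ≤ k ≤ n−1, |E[1_{C_k}·f(x_n)·exp(V(x_1)+⋯+V(x_n))]| ≤ C·e^{sup V}·‖f‖_∞·‖Q_{n−k−1}^V 1‖_∞·‖Q_k^V 1‖_∞·q^k·d(x,x'), where C_k = (∩_{j=0}^{k−1} A_j) ∩ A_k^c with A_j = {ω : d(x_{j+1}(ω), x_{j+1}'(ω)) ≤ q·d(x_j(ω), x_j'(ω))}. -/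

import Mathlib

/-!
Write `y = R x x' a`, `y' = R' x x' a` for the first step of the coupled chain. Under the product
measure the first noise coordinate `a` is independent of the remaining ones, which again have law
`P`, and after one step the chain is the chain restarted at `(y, y')`. The weight factorises as
`f(x_{n+1}) e^{V(x_1)+⋯+V(x_{n+1})} = e^{V(y)} · (weight of the restarted chain)`, so integrating
out `a` gives
* `E[1_{C_0} …] = ∫_{A_0ᶜ} e^{V(y)} Q_n^V f(y) dP₀`, at most
  `e^{sup V} ‖f‖_∞ ‖Q_n^V 1‖_∞ · P₀(A_0ᶜ) ≤ e^{sup V} ‖f‖_∞ ‖Q_n^V 1‖_∞ · C d(x,x')`;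
* `E[1_{C_{k+1}} …] = ∫_{A_0} e^{V(y)} E_{(y,y')}[1_{C_k} …] dP₀`.

By induction on `k` this gives the bound with `(Q_k^V 1)(x)` in place of `‖Q_k^V 1‖_∞`: on `A_0`
we have `d(y,y') ≤ q d(x,x')`, and `∫ e^{V(y)} (Q_k^V 1)(y) dP₀ = (Q_{k+1}^V 1)(x)`.
-/

open MeasureTheory Filter Topology
open scoped ENNReal NNReal

noncomputable def FK {X : Type*} [MeasurableSpace X] (κ : X → Measure X) (V f : X → ℝ) (x : X) : ℝ :=
  ∫ y, Real.exp (V y) * f y ∂(κ x)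

noncomputable def FKiter {X : Type*} [MeasurableSpace X] (κ : X → Measure X) (V : X → ℝ) :
    ℕ → (X → ℝ) → X → ℝ
  | 0 => fun f => f
  | n + 1 => fun f => FK κ V (FKiter κ V n f)

noncomputable def supNorm {X : Type*} (f : X → ℝ) : ℝ := ⨆ x, |f x|

noncomputable def lipConst {X : Type*} [MetricSpace X] (f : X → ℝ) : ℝ :=
  sSup {c | ∃ x y, x ≠ y ∧ c = |f x - f y| / dist x y}

noncomputable def lipNorm {X : Type*} [MetricSpace X] (f : X → ℝ) : ℝ := supNorm f + lipConst f

/-- The coupled chain `(x_k, x_k')` driven by the maps `R, R'` and the noise sequence `ω`. -/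
def chain {X Ω₀ : Type*} (R R' : X → X → Ω₀ → X) (x x' : X) : ℕ → (ℕ → Ω₀) → X × X
  | 0 => fun _ => (x, x')
  | k + 1 => fun ω =>
      (R (chain R R' x x' k ω).1 (chain R R' x x' k ω).2 (ω k),
       R' (chain R R' x x' k ω).1 (chain R R' x x' k ω).2 (ω k))

/-- The squeezing event `A_j` for the coupled chain. -/
def eventA {X Ω₀ : Type*} [MetricSpace X] (R R' : X → X → Ω₀ → X) (x x' : X) (q : ℝ)
    (j : ℕ) : Set (ℕ → Ω₀) :=
  {ω | dist (chain R R' x x' (j + 1) ω).1 (chain R R' x x' (j + 1) ω).2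
        ≤ q * dist (chain R R' x x' j ω).1 (chain R R' x x' j ω).2}

/-- The good event `B_k = ∩_{j<k} A_j`. -/
def eventB {X Ω₀ : Type*} [MetricSpace X] (R R' : X → X → Ω₀ → X) (x x' : X) (q : ℝ)
    (k : ℕ) : Set (ℕ → Ω₀) :=
  ⋂ j ∈ Finset.range k, eventA R R' x x' q j

/-- The bad event `C_k = B_k ∩ A_kᶜ`. -/
def eventC {X Ω₀ : Type*} [MetricSpace X] (R R' : X → X → Ω₀ → X) (x x' : X) (q : ℝ)
    (k : ℕ) : Set (ℕ → Ω₀) :=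
  eventB R R' x x' q k ∩ (eventA R R' x x' q k)ᶜ

open ProbabilityTheory

namespace MeasureTheory.Measure

variable {Ω₀ : Type*} [MeasurableSpace Ω₀]

theorem eq_infinitePi_of_map_fin {P₀ : Measure Ω₀} [IsProbabilityMeasure P₀]
    {P : Measure (ℕ → Ω₀)}
    (hP : ∀ n : ℕ, P.map (fun ω (i : Fin n) => ω i) = Measure.pi fun _ : Fin n => P₀) :
    P = infinitePi fun _ : ℕ => P₀ := by
  classical
  refine eq_infinitePi _ fun s t ht => ?_
  obtain ⟨n, hsn⟩ : ∃ n, s ⊆ Finset.range n :=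
    ⟨s.sup id + 1, fun i hi => Finset.mem_range.2 (Nat.lt_succ_of_le (Finset.le_sup (f := id) hi))⟩
  have hbox : Set.pi (s : Set ℕ) t = (fun ω (i : Fin n) => ω i) ⁻¹'
      Set.univ.pi (fun i : Fin n => if (i : ℕ) ∈ s then t i else Set.univ) := by
    ext ω
    simp only [Set.mem_pi, Finset.mem_coe, Set.mem_preimage, Set.mem_univ, true_implies]
    refine ⟨fun h i => ?_, fun h i hi => by simpa [hi] using h ⟨i, Finset.mem_range.1 (hsn hi)⟩⟩
    split_ifs with hi
    exacts [h i hi, trivial]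
  rw [hbox, ← map_apply (by fun_prop) (.univ_pi fun i => by split_ifs <;> simp [ht]), hP,
    pi_pi]
  simp only [apply_ite P₀, measure_univ]
  rw [Fin.prod_univ_eq_prod_range (fun i => if i ∈ s then P₀ (t i) else 1), Finset.prod_ite_mem,
    Finset.inter_eq_right.2 hsn]

theorem infinitePi_map_head_tail (μ : Measure Ω₀) [IsProbabilityMeasure μ] :
    (infinitePi fun _ : ℕ => μ).map (fun ω => (ω 0, fun i => ω (i + 1))) =
      μ.prod (infinitePi fun _ : ℕ => μ) := by
  set ν := infinitePi fun _ : ℕ => μ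
  have hcoord : iIndepFun (fun i (ω : ℕ → Ω₀) => ω i) ν :=
    iIndepFun_infinitePi (X := fun _ ω => ω) fun _ => measurable_id
  have hsplit := indep_iSup_of_disjoint (fun i => (measurable_pi_apply i).comap_le) hcoord
    (disjoint_compl_right (a := ({0} : Set ℕ)))
  have hindep : IndepFun (fun ω : ℕ → Ω₀ => ω 0) (fun ω i => ω (i + 1)) ν := by
    rw [IndepFun_iff_Indep]
    refine indep_of_indep_of_le_right (indep_of_indep_of_le_left hsplit ?_) ?_
    · exact le_iSup₂_of_le 0 rfl le_rfl
    · refine Measurable.comap_le (@measurable_pi_lambda _ _ _ (⨆ i ∈ ({0} : Set ℕ)ᶜ, _) _ _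
        fun i => ?_)
      exact (comap_measurable _).mono (le_iSup₂_of_le (i + 1) (Nat.succ_ne_zero i) le_rfl) le_rfl
  rw [hindep.map_prod_eq_prod_map_map (measurable_pi_apply 0).aemeasurable
    (measurable_pi_lambda _ fun i => measurable_pi_apply (i + 1)).aemeasurable,
    infinitePi_map_eval, map_infinitePi_infinitePi_of_inj Nat.succ_injective]

end MeasureTheory.Measure

section HeadTail

variable {Ω₀ : Type*} [MeasurableSpace Ω₀] {μ : Measure Ω₀} {ν : Measure (ℕ → Ω₀)}
  [SFinite μ] [SFinite ν] (hν : ν.map (fun ω => (ω 0, fun i => ω (i + 1))) = μ.prod ν)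
include hν

theorem integral_comp_head_tail {F : Ω₀ × (ℕ → Ω₀) → ℝ} (hF : Integrable F (μ.prod ν)) :
    ∫ ω, F (ω 0, fun i => ω (i + 1)) ∂ν = ∫ a, ∫ ω, F (a, ω) ∂ν ∂μ := by
  rw [← integral_prod F hF, ← hν, integral_map (by fun_prop) (by rw [hν]; exact hF.1)]

theorem setIntegral_comp_head_tail {A : Set Ω₀} {S : Set (Ω₀ × (ℕ → Ω₀))}
    (hA : MeasurableSet A) (hS : MeasurableSet S) {F : Ω₀ × (ℕ → Ω₀) → ℝ}
    (hF : Integrable F (μ.prod ν)) :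
    ∫ ω in {ω | ω 0 ∈ A ∧ (ω 0, fun i => ω (i + 1)) ∈ S}, F (ω 0, fun i => ω (i + 1)) ∂ν =
      ∫ a in A, ∫ ω in {ω | (a, ω) ∈ S}, F (a, ω) ∂ν ∂μ := by
  have hAS : MeasurableSet (Prod.fst ⁻¹' A ∩ S) := (measurable_fst hA).inter hS
  have hsection (a : Ω₀) : ∫ ω, (Prod.fst ⁻¹' A ∩ S).indicator F (a, ω) ∂ν =
      A.indicator (fun a => ∫ ω in {ω | (a, ω) ∈ S}, F (a, ω) ∂ν) a := by
    by_cases ha : a ∈ A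
    · rw [Set.indicator_of_mem ha, ← integral_indicator (s := {ω | (a, ω) ∈ S})
        (measurable_prodMk_left hS)]
      congr 1 with ω
      by_cases hω : (a, ω) ∈ S <;> simp [Set.indicator, ha, hω]
    · simp [Set.indicator, ha]
  have hT : MeasurableSet {ω : ℕ → Ω₀ | ω 0 ∈ A ∧ (ω 0, fun i => ω (i + 1)) ∈ S} :=
    hAS.preimage (f := fun ω : ℕ → Ω₀ => (ω 0, fun i => ω (i + 1))) (by fun_prop)
  rw [← integral_indicator hT, ← integral_indicator hA]
  simp_rw [← hsection]
  exact integral_comp_head_tail hν (hF.indicator hAS)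

end HeadTail

theorem Measurable.of_uncurry_left₂ {α β γ δ : Type*} [MeasurableSpace α] [MeasurableSpace β]
    [MeasurableSpace γ] [MeasurableSpace δ] {g : α → β → γ → δ}
    (hg : Measurable fun p : (α × β) × γ => g p.1.1 p.1.2 p.2) (a : α) (b : β) :
    Measurable (g a b) :=
  hg.comp (measurable_prodMk_left (x := (a, b)))

section Chain

variable {X Ω₀ : Type*} (R R' : X → X → Ω₀ → X)

theorem chain_succ_eq_chain_tail (x x' : X) (k : ℕ) (ω : ℕ → Ω₀) :
    chain R R' x x' (k + 1) ω =
      chain R R' (R x x' (ω 0)) (R' x x' (ω 0)) k fun i => ω (i + 1) := by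
  induction k with
  | zero => rfl
  | succ k ih => exact congrArg (fun p => (R p.1 p.2 (ω (k + 1)), R' p.1 p.2 (ω (k + 1)))) ih

noncomputable def fkIntegrand (V f : X → ℝ) (x x' : X) (n : ℕ) (ω : ℕ → Ω₀) : ℝ :=
  f (chain R R' x x' n ω).1 * Real.exp (∑ i ∈ Finset.Icc 1 n, V (chain R R' x x' i ω).1)

theorem fkIntegrand_succ (V f : X → ℝ) (x x' : X) (n : ℕ) (ω : ℕ → Ω₀) :
    fkIntegrand R R' V f x x' (n + 1) ω =
      Real.exp (V (R x x' (ω 0))) *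
        fkIntegrand R R' V f (R x x' (ω 0)) (R' x x' (ω 0)) n fun i => ω (i + 1) := by
  simp only [fkIntegrand]
  rw [← Finset.Ico_add_one_right_eq_Icc, Finset.sum_eq_sum_Ico_succ_bot (by omega),
    ← Finset.sum_Ico_add', Finset.Ico_add_one_right_eq_Icc, Real.exp_add]
  simp only [chain_succ_eq_chain_tail R R' x x' _ ω, chain.eq_1]
  ring

theorem abs_fkIntegrand_le {V f : X → ℝ} {cV cf : ℝ} (hV : ∀ y, V y ≤ cV) (hf : ∀ y, |f y| ≤ cf)
    (x x' : X) (n : ℕ) (ω : ℕ → Ω₀) :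
    |fkIntegrand R R' V f x x' n ω| ≤ cf * Real.exp (n * cV) := by
  have hsum : ∑ i ∈ Finset.Icc 1 n, V (chain R R' x x' i ω).1 ≤ n * cV := by
    simpa [Nat.card_Icc] using
      Finset.sum_le_card_nsmul (Finset.Icc 1 n) _ _ fun i _ => hV (chain R R' x x' i ω).1
  rw [fkIntegrand, abs_mul, abs_of_pos (Real.exp_pos _)]
  exact mul_le_mul (hf _) (Real.exp_le_exp.2 hsum) (Real.exp_pos _).le
    ((abs_nonneg _).trans (hf (chain R R' x x' n ω).1))

section Measurability

variable [MeasurableSpace X] [MeasurableSpace Ω₀]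
  (hR : Measurable fun p : (X × X) × Ω₀ => R p.1.1 p.1.2 p.2)
  (hR' : Measurable fun p : (X × X) × Ω₀ => R' p.1.1 p.1.2 p.2)
include hR hR'

theorem measurable_chain (k : ℕ) :
    Measurable fun p : (X × X) × (ℕ → Ω₀) => chain R R' p.1.1 p.1.2 k p.2 := by
  induction k with
  | zero => exact measurable_fst
  | succ k ih =>
    have hstep : Measurable fun p : (X × X) × (ℕ → Ω₀) => (chain R R' p.1.1 p.1.2 k p.2, p.2 k) :=
      ih.prodMk ((measurable_pi_apply k).comp measurable_snd)
    exact (hR.comp hstep).prodMk (hR'.comp hstep)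

theorem measurable_restart (x x' : X) :
    Measurable fun p : Ω₀ × (ℕ → Ω₀) => ((R x x' p.1, R' x x' p.1), p.2) :=
  (((hR.of_uncurry_left₂ x x').comp measurable_fst).prodMk
    ((hR'.of_uncurry_left₂ x x').comp measurable_fst)).prodMk measurable_snd

theorem measurable_fkIntegrand {V f : X → ℝ} (hV : Measurable V) (hf : Measurable f) (n : ℕ) :
    Measurable fun p : (X × X) × (ℕ → Ω₀) => fkIntegrand R R' V f p.1.1 p.1.2 n p.2 :=
  (hf.comp (measurable_chain R R' hR hR' n).fst).mul <| Real.measurable_exp.comp <|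
    Finset.measurable_sum _ fun i _ => hV.comp (measurable_chain R R' hR hR' i).fst

theorem measurableSet_eventC [MetricSpace X] [BorelSpace X] [SecondCountableTopology X]
    (q : ℝ) (k : ℕ) :
    MeasurableSet {p : (X × X) × (ℕ → Ω₀) | p.2 ∈ eventC R R' p.1.1 p.1.2 q k} := by
  have hA (j : ℕ) : MeasurableSet {p : (X × X) × (ℕ → Ω₀) | p.2 ∈ eventA R R' p.1.1 p.1.2 q j} :=
    measurableSet_le ((measurable_chain R R' hR hR' (j + 1)).fst.dist
      (measurable_chain R R' hR hR' (j + 1)).snd)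
      (measurable_const.mul ((measurable_chain R R' hR hR' j).fst.dist
        (measurable_chain R R' hR hR' j).snd))
  simp only [eventC, eventB, Set.mem_inter_iff, Set.mem_iInter, Set.mem_compl_iff,
    Set.ofPred_and, Set.ofPred_forall]
  exact (MeasurableSet.iInter fun j => .iInter fun _ => hA j).inter (hA k).compl

end Measurability

section Events

variable [MetricSpace X] (q : ℝ) (x x' : X) (ω : ℕ → Ω₀)

theorem mem_eventA_succ (j : ℕ) :
    ω ∈ eventA R R' x x' q (j + 1) ↔
      (fun i => ω (i + 1)) ∈ eventA R R' (R x x' (ω 0)) (R' x x' (ω 0)) q j := by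
  simp only [eventA, Set.mem_ofPred_eq, chain_succ_eq_chain_tail R R' x x' _ ω]

theorem mem_eventC_zero :
    ω ∈ eventC R R' x x' q 0 ↔ q * dist x x' < dist (R x x' (ω 0)) (R' x x' (ω 0)) := by
  simp [eventC, eventB, eventA, chain]

theorem mem_eventC_succ (k : ℕ) :
    ω ∈ eventC R R' x x' q (k + 1) ↔
      dist (R x x' (ω 0)) (R' x x' (ω 0)) ≤ q * dist x x' ∧
        (fun i => ω (i + 1)) ∈ eventC R R' (R x x' (ω 0)) (R' x x' (ω 0)) q k := by
  simp only [eventC, eventB, Set.mem_inter_iff, Set.mem_iInter, Finset.mem_range,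
    Set.mem_compl_iff, Nat.forall_lt_succ_left, mem_eventA_succ]
  simp only [eventA, Set.mem_ofPred_eq, chain]
  tauto

end Events

end Chain

theorem supNorm_nonneg {X : Type*} (g : X → ℝ) : 0 ≤ supNorm g :=
  Real.iSup_nonneg fun _ => abs_nonneg _

section SupNorm

variable {X : Type*} [TopologicalSpace X] [CompactSpace X]

theorem abs_le_supNorm {g : X → ℝ} (hg : Continuous g) (z : X) : |g z| ≤ supNorm g :=
  le_ciSup (isCompact_range hg.abs).bddAbove z

theorem integrable_comp_of_continuous [MeasurableSpace X] [OpensMeasurableSpace X]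
    {Ω : Type*} [MeasurableSpace Ω] {μ : Measure Ω} [IsFiniteMeasure μ] {g : X → ℝ}
    (hg : Continuous g) {Y : Ω → X} (hY : Measurable Y) : Integrable (fun a => g (Y a)) μ :=
  .of_bound (hg.measurable.comp hY).aestronglyMeasurable (supNorm g) <|
    ae_of_all _ fun a => abs_le_supNorm hg (Y a)

end SupNorm

section FeynmanKac

variable {X : Type*} [MeasurableSpace X] {κ : X → Measure X} {V : X → ℝ}

theorem FKiter_one_nonneg (n : ℕ) (z : X) : 0 ≤ FKiter κ V n 1 z := by
  induction n generalizing z with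
  | zero => exact zero_le_one
  | succ n ih => exact integral_nonneg fun y => mul_nonneg (Real.exp_pos _).le (ih y)

variable [TopologicalSpace X]

theorem continuous_FKiter
    (hFeller : ∀ f : X → ℝ, Continuous f → Continuous fun x => ∫ y, f y ∂(κ x))
    (hV : Continuous V) {f : X → ℝ} (hf : Continuous f) (n : ℕ) :
    Continuous (FKiter κ V n f) := by
  induction n with
  | zero => exact hf
  | succ n ih => exact hFeller _ ((Real.continuous_exp.comp hV).mul ih)

variable [OpensMeasurableSpace X]

theorem integral_exp_mul_comp_eq_FK {Ω : Type*} [MeasurableSpace Ω] {μ : Measure Ω} {Y : Ω → X}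
    (hY : Measurable Y) {x : X} (hlaw : μ.map Y = κ x) (hV : Continuous V) {g : X → ℝ}
    (hg : Continuous g) :
    ∫ a, Real.exp (V (Y a)) * g (Y a) ∂μ = FK κ V g x := by
  rw [FK, ← hlaw, integral_map (f := fun y => Real.exp (V y) * g y) hY.aemeasurable
    ((Real.continuous_exp.comp hV).mul hg).aestronglyMeasurable]

theorem abs_FKiter_le [CompactSpace X] [∀ x, IsFiniteMeasure (κ x)]
    (hFeller : ∀ f : X → ℝ, Continuous f → Continuous fun x => ∫ y, f y ∂(κ x))
    (hV : Continuous V) {f : X → ℝ} (hf : Continuous f) (n : ℕ) (z : X) :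
    |FKiter κ V n f z| ≤ supNorm f * FKiter κ V n 1 z := by
  induction n generalizing z with
  | zero => simpa [FKiter] using abs_le_supNorm hf z
  | succ n ih =>
    have hdom : Integrable (fun y => Real.exp (V y) * (supNorm f * FKiter κ V n 1 y)) (κ z) :=
      integrable_comp_of_continuous ((Real.continuous_exp.comp hV).mul
        (continuous_const.mul (continuous_FKiter hFeller hV continuous_const n))) measurable_id
    calc |FKiter κ V (n + 1) f z|
        ≤ ∫ y, Real.exp (V y) * (supNorm f * FKiter κ V n 1 y) ∂(κ z) := by
          rw [← Real.norm_eq_abs]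
          refine norm_integral_le_of_norm_le hdom (ae_of_all _ fun y => ?_)
          rw [norm_mul, Real.norm_eq_abs, Real.norm_eq_abs, abs_of_pos (Real.exp_pos _)]
          exact mul_le_mul_of_nonneg_left (ih y) (Real.exp_pos _).le
      _ = supNorm f * FKiter κ V (n + 1) 1 z := by
          simp_rw [mul_left_comm _ (supNorm f), integral_const_mul]
          rfl

end FeynmanKac

section CoupledChain

variable {X : Type*} [MetricSpace X] [CompactSpace X] [MeasurableSpace X] [BorelSpace X]
  {κ : X → Measure X} {Ω₀ : Type*} [MeasurableSpace Ω₀] {P₀ : Measure Ω₀}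
  [IsProbabilityMeasure P₀] {R R' : X → X → Ω₀ → X} {V f : X → ℝ} {q : ℝ}
  (hFeller : ∀ f : X → ℝ, Continuous f → Continuous fun x => ∫ y, f y ∂(κ x))
  (hR : Measurable fun p : (X × X) × Ω₀ => R p.1.1 p.1.2 p.2)
  (hR' : Measurable fun p : (X × X) × Ω₀ => R' p.1.1 p.1.2 p.2)
  (hRlaw : ∀ x x' : X, Measure.map (R x x') P₀ = κ x) (hV : Continuous V) (hf : Continuous f)
include hR hR' hV hf

local notation "𝐏" => Measure.infinitePi fun _ : ℕ => P₀

theorem integrable_fkIntegrand_restart (x x' : X) (n : ℕ) :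
    Integrable (fun p : Ω₀ × (ℕ → Ω₀) => Real.exp (V (R x x' p.1)) *
      fkIntegrand R R' V f (R x x' p.1) (R' x x' p.1) n p.2) (P₀.prod 𝐏) := by
  have hmeas : Measurable fun p : Ω₀ × (ℕ → Ω₀) => Real.exp (V (R x x' p.1)) *
      fkIntegrand R R' V f (R x x' p.1) (R' x x' p.1) n p.2 :=
    (Real.measurable_exp.comp (hV.measurable.comp ((hR.of_uncurry_left₂ x x').comp measurable_fst))).mul
      ((measurable_fkIntegrand R R' hR hR' hV.measurable hf.measurable n).comp
        (measurable_restart R R' hR hR' x x'))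
  refine .of_bound hmeas.aestronglyMeasurable
    (Real.exp (supNorm V) * (supNorm f * Real.exp (n * supNorm V))) (ae_of_all _ fun p => ?_)
  have hVle (y : X) : V y ≤ supNorm V := (le_abs_self _).trans (abs_le_supNorm hV y)
  rw [norm_mul, Real.norm_eq_abs, Real.norm_eq_abs, abs_of_pos (Real.exp_pos _)]
  exact mul_le_mul (Real.exp_le_exp.2 (hVle _))
    (abs_fkIntegrand_le R R' hVle (abs_le_supNorm hf) _ _ _ _) (abs_nonneg _) (Real.exp_pos _).le

include hFeller hRlaw in
theorem integral_fkIntegrand (n : ℕ) (x x' : X) :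
    ∫ ω, fkIntegrand R R' V f x x' n ω ∂𝐏 = FKiter κ V n f x := by
  induction n generalizing x x' with
  | zero => simp [fkIntegrand, chain, FKiter]
  | succ n ih =>
    simp_rw [fkIntegrand_succ]
    refine (integral_comp_head_tail (Measure.infinitePi_map_head_tail P₀)
      (integrable_fkIntegrand_restart hR hR' hV hf x x' n)).trans ?_
    simp_rw [integral_const_mul, ih]
    exact integral_exp_mul_comp_eq_FK (hR.of_uncurry_left₂ x x') (hRlaw x x') hV
      (continuous_FKiter hFeller hV hf n)

include hFeller hRlaw in
theorem setIntegral_eventC_zero (x x' : X) (n : ℕ) :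
    ∫ ω in eventC R R' x x' q 0, fkIntegrand R R' V f x x' (n + 1) ω ∂𝐏 =
      ∫ a in {a | q * dist x x' < dist (R x x' a) (R' x x' a)},
        Real.exp (V (R x x' a)) * FKiter κ V n f (R x x' a) ∂P₀ := by
  have hbad : MeasurableSet {a | q * dist x x' < dist (R x x' a) (R' x x' a)} :=
    measurableSet_lt measurable_const
      ((hR.of_uncurry_left₂ x x').dist (hR'.of_uncurry_left₂ x x'))
  have hC0 : eventC R R' x x' q 0 = {ω | ω 0 ∈ {a | q * dist x x' < dist (R x x' a) (R' x x' a)} ∧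
      (ω 0, fun i => ω (i + 1)) ∈ Set.univ} := by
    ext ω
    simp [mem_eventC_zero]
  simp_rw [hC0, fkIntegrand_succ]
  refine (setIntegral_comp_head_tail (Measure.infinitePi_map_head_tail P₀) hbad .univ
    (integrable_fkIntegrand_restart hR hR' hV hf x x' n)).trans ?_
  simp only [Set.mem_univ, Set.ofPred_true, Measure.restrict_univ, integral_const_mul,
    integral_fkIntegrand hFeller hR hR' hRlaw hV hf]

theorem setIntegral_eventC_succ (x x' : X) (k n : ℕ) :
    ∫ ω in eventC R R' x x' q (k + 1), fkIntegrand R R' V f x x' (n + 1) ω ∂𝐏 =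
      ∫ a in {a | dist (R x x' a) (R' x x' a) ≤ q * dist x x'}, Real.exp (V (R x x' a)) *
        ∫ ω in eventC R R' (R x x' a) (R' x x' a) q k,
          fkIntegrand R R' V f (R x x' a) (R' x x' a) n ω ∂𝐏 ∂P₀ := by
  have hgood : MeasurableSet {a | dist (R x x' a) (R' x x' a) ≤ q * dist x x'} :=
    measurableSet_le ((hR.of_uncurry_left₂ x x').dist (hR'.of_uncurry_left₂ x x'))
      measurable_const
  have hS : MeasurableSet
      {p : Ω₀ × (ℕ → Ω₀) | p.2 ∈ eventC R R' (R x x' p.1) (R' x x' p.1) q k} :=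
    measurable_restart R R' hR hR' x x' (measurableSet_eventC R R' hR hR' q k)
  have hCsucc : eventC R R' x x' q (k + 1) =
      {ω | ω 0 ∈ {a | dist (R x x' a) (R' x x' a) ≤ q * dist x x'} ∧
        (ω 0, fun i => ω (i + 1)) ∈
          {p : Ω₀ × (ℕ → Ω₀) | p.2 ∈ eventC R R' (R x x' p.1) (R' x x' p.1) q k}} :=
    Set.ext fun ω => mem_eventC_succ R R' q x x' ω k
  simp_rw [hCsucc, fkIntegrand_succ]
  refine (setIntegral_comp_head_tail (Measure.infinitePi_map_head_tail P₀) hgood hS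
    (integrable_fkIntegrand_restart hR hR' hV hf x x' n)).trans ?_
  simp only [integral_const_mul]
  rfl

include hFeller hRlaw in
theorem abs_setIntegral_eventC_zero_le [∀ x, IsFiniteMeasure (κ x)]
    {C : ℝ} (hC : 0 ≤ C)
    (hcouple : ∀ x x' : X,
      P₀ {ω | q * dist x x' < dist (R x x' ω) (R' x x' ω)} ≤ ENNReal.ofReal (C * dist x x'))
    (x x' : X) (n : ℕ) :
    |∫ ω in eventC R R' x x' q 0, fkIntegrand R R' V f x x' (n + 1) ω ∂𝐏| ≤
      C * Real.exp (⨆ y, V y) * supNorm f * supNorm (FKiter κ V n 1) * dist x x' := by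
  have hbound (y : X) : |Real.exp (V y) * FKiter κ V n f y| ≤
      Real.exp (⨆ y, V y) * (supNorm f * supNorm (FKiter κ V n 1)) := by
    rw [abs_mul, abs_of_pos (Real.exp_pos _)]
    refine mul_le_mul (Real.exp_le_exp.2 (le_ciSup (isCompact_range hV).bddAbove y)) ?_
      (abs_nonneg _) (Real.exp_pos _).le
    refine (abs_FKiter_le hFeller hV hf n y).trans (mul_le_mul_of_nonneg_left ?_ (supNorm_nonneg f))
    exact (le_abs_self _).trans (abs_le_supNorm (continuous_FKiter hFeller hV continuous_one n) y)
  have hbad : P₀.real {a | q * dist x x' < dist (R x x' a) (R' x x' a)} ≤ C * dist x x' :=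
    ENNReal.toReal_le_of_le_ofReal (mul_nonneg hC dist_nonneg) (hcouple x x')
  rw [setIntegral_eventC_zero hFeller hR hR' hRlaw hV hf, ← Real.norm_eq_abs]
  calc _ ≤ Real.exp (⨆ y, V y) * (supNorm f * supNorm (FKiter κ V n 1)) *
        P₀.real {a | q * dist x x' < dist (R x x' a) (R' x x' a)} :=
        norm_setIntegral_le_of_norm_le_const (measure_lt_top _ _) fun a _ => hbound (R x x' a)
    _ ≤ Real.exp (⨆ y, V y) * (supNorm f * supNorm (FKiter κ V n 1)) * (C * dist x x') := by
        have := supNorm_nonneg f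
        have := supNorm_nonneg (FKiter κ V n 1)
        gcongr
    _ = C * Real.exp (⨆ y, V y) * supNorm f * supNorm (FKiter κ V n 1) * dist x x' := by ring

include hFeller hRlaw in
theorem abs_setIntegral_eventC_succ_le (hq : 0 ≤ q) {D : ℝ} (hD : 0 ≤ D) (k n : ℕ)
    (ih : ∀ y y' : X, |∫ ω in eventC R R' y y' q k, fkIntegrand R R' V f y y' n ω ∂𝐏| ≤
      D * FKiter κ V k 1 y * q ^ k * dist y y')
    (x x' : X) :
    |∫ ω in eventC R R' x x' q (k + 1), fkIntegrand R R' V f x x' (n + 1) ω ∂𝐏| ≤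
      D * FKiter κ V (k + 1) 1 x * q ^ (k + 1) * dist x x' := by
  set good := {a | dist (R x x' a) (R' x x' a) ≤ q * dist x x'}
  have hgood : MeasurableSet good :=
    measurableSet_le ((hR.of_uncurry_left₂ x x').dist (hR'.of_uncurry_left₂ x x'))
      measurable_const
  have hQk := continuous_FKiter hFeller hV continuous_one k
  have hdom : Integrable (fun a => Real.exp (V (R x x' a)) * FKiter κ V k 1 (R x x' a) *
      (D * q ^ (k + 1) * dist x x')) P₀ :=
    (integrable_comp_of_continuous ((Real.continuous_exp.comp hV).mul hQk)
      (hR.of_uncurry_left₂ x x')).mul_const _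
  have hdom_nonneg (a : Ω₀) : 0 ≤ Real.exp (V (R x x' a)) * FKiter κ V k 1 (R x x' a) *
      (D * q ^ (k + 1) * dist x x') := by
    have := FKiter_one_nonneg (κ := κ) (V := V) k (R x x' a)
    positivity
  rw [setIntegral_eventC_succ hR hR' hV hf, ← Real.norm_eq_abs]
  calc _ ≤ ∫ a in good, Real.exp (V (R x x' a)) * FKiter κ V k 1 (R x x' a) *
        (D * q ^ (k + 1) * dist x x') ∂P₀ := by
        refine norm_integral_le_of_norm_le hdom.restrict
          (ae_restrict_of_forall_mem hgood fun a ha => ?_)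
        rw [norm_mul, Real.norm_eq_abs, Real.norm_eq_abs, abs_of_pos (Real.exp_pos _)]
        calc _ ≤ Real.exp (V (R x x' a)) * (D * FKiter κ V k 1 (R x x' a) * q ^ k *
              dist (R x x' a) (R' x x' a)) := by gcongr; exact ih _ _
          _ ≤ Real.exp (V (R x x' a)) * (D * FKiter κ V k 1 (R x x' a) * q ^ k *
              (q * dist x x')) := by
              have := FKiter_one_nonneg (κ := κ) (V := V) k (R x x' a)
              gcongr
              exact ha
          _ = _ := by ring
    _ ≤ ∫ a, Real.exp (V (R x x' a)) * FKiter κ V k 1 (R x x' a) *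
        (D * q ^ (k + 1) * dist x x') ∂P₀ := setIntegral_le_integral hdom (ae_of_all _ hdom_nonneg)
    _ = D * FKiter κ V (k + 1) 1 x * q ^ (k + 1) * dist x x' := by
        rw [integral_mul_const, integral_exp_mul_comp_eq_FK (hR.of_uncurry_left₂ x x') (hRlaw x x')
          hV hQk]
        simp only [FKiter]
        ring

include hFeller hRlaw in
theorem abs_setIntegral_eventC_le [∀ x, IsFiniteMeasure (κ x)]
    (hq : 0 ≤ q) {C : ℝ} (hC : 0 ≤ C)
    (hcouple : ∀ x x' : X,
      P₀ {ω | q * dist x x' < dist (R x x' ω) (R' x x' ω)} ≤ ENNReal.ofReal (C * dist x x'))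
    (k m : ℕ) (x x' : X) :
    |∫ ω in eventC R R' x x' q k, fkIntegrand R R' V f x x' (m + k + 1) ω ∂𝐏| ≤
      C * Real.exp (⨆ y, V y) * supNorm f * supNorm (FKiter κ V m 1) * FKiter κ V k 1 x *
        q ^ k * dist x x' := by
  induction k generalizing x x' with
  | zero =>
    simpa [FKiter] using
      abs_setIntegral_eventC_zero_le hFeller hR hR' hRlaw hV hf hC hcouple x x' m
  | succ k ih =>
    have hD : 0 ≤ C * Real.exp (⨆ y, V y) * supNorm f * supNorm (FKiter κ V m 1) := by
      have := supNorm_nonneg f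
      have := supNorm_nonneg (FKiter κ V m 1)
      positivity
    exact abs_setIntegral_eventC_succ_le hFeller hR hR' hRlaw hV hf hq hD k (m + k + 1) ih x x'

end CoupledChain

theorem bad_event_FK_estimate_general
    {X : Type*} [MetricSpace X] [CompactSpace X] [MeasurableSpace X] [BorelSpace X]
    (κ : X → Measure X)
    (hκprob : ∀ x, IsProbabilityMeasure (κ x))
    (hFeller : ∀ f : X → ℝ, Continuous f → Continuous fun x => ∫ y, f y ∂(κ x))
    {Ω₀ : Type*} [MeasurableSpace Ω₀] (P₀ : Measure Ω₀) [IsProbabilityMeasure P₀]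
    (q : ℝ) (hq0 : 0 ≤ q) (C : ℝ) (hC : 0 < C)
    (R R' : X → X → Ω₀ → X)
    (hRmeas : Measurable fun p : (X × X) × Ω₀ => R p.1.1 p.1.2 p.2)
    (hR'meas : Measurable fun p : (X × X) × Ω₀ => R' p.1.1 p.1.2 p.2)
    (hRlaw : ∀ x x' : X, Measure.map (R x x') P₀ = κ x)
    (hcouple : ∀ x x' : X,
      P₀ {ω | q * dist x x' < dist (R x x' ω) (R' x x' ω)} ≤ ENNReal.ofReal (C * dist x x'))
    -- `P` is the countable product measure `P₀^{⊗ℕ}` on `Ω = Ω₀^ℕ`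
    (P : Measure (ℕ → Ω₀))
    (hP : ∀ n : ℕ, Measure.map (fun ω (i : Fin n) => ω i) P = Measure.pi fun _ : Fin n => P₀)
    (V : X → ℝ) (hV : Continuous V)
    (x x' : X) (f : X → ℝ) (hf : Continuous f)
    (n : ℕ) (hn : 1 ≤ n) (k : ℕ) (hk : k ≤ n - 1) :
    |∫ ω in eventC R R' x x' q k,
        f (chain R R' x x' n ω).1
          * Real.exp (∑ i ∈ Finset.Icc 1 n, V (chain R R' x x' i ω).1) ∂P|
      ≤ C * Real.exp (⨆ y : X, V y) * supNorm f * supNorm (FKiter κ V (n - k - 1) 1)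
          * supNorm (FKiter κ V k 1) * q ^ k * dist x x' := by
  obtain rfl := Measure.eq_infinitePi_of_map_fin hP
  obtain ⟨m, rfl⟩ : ∃ m, n = m + k + 1 := ⟨n - k - 1, by omega⟩
  rw [show m + k + 1 - k - 1 = m by omega]
  calc _ ≤ C * Real.exp (⨆ y, V y) * supNorm f * supNorm (FKiter κ V m 1) * FKiter κ V k 1 x *
        q ^ k * dist x x' :=
        abs_setIntegral_eventC_le hFeller hRmeas hR'meas hRlaw hV hf hq0 hC.le hcouple k m x x'
    _ ≤ _ := by
        have := supNorm_nonneg f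
        have := supNorm_nonneg (FKiter κ V m 1)
        gcongr
        exact (le_abs_self _).trans
          (abs_le_supNorm (continuous_FKiter hFeller hV continuous_one k) x)

/-- Bad-event estimate for the Feynman–Kac semigroup along the coupled
chain: `|E[1_{C_k}·f(x_n)·e^{V(x_1)+⋯+V(x_n)}]| ≤
C·e^{sup V}·‖f‖_∞·‖Q_{n−k−1}^V 1‖_∞·‖Q_k^V 1‖_∞·q^k·d(x,x')`. -/
theorem bad_event_FK_estimate
    {X : Type*} [MetricSpace X] [CompactSpace X] [MeasurableSpace X] [BorelSpace X]
    (κ : X → Measure X) (hκmeas : Measurable κ)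
    (hκprob : ∀ x, IsProbabilityMeasure (κ x))
    (hFeller : ∀ f : X → ℝ, Continuous f → Continuous fun x => ∫ y, f y ∂(κ x))
    {Ω₀ : Type*} [MeasurableSpace Ω₀] (P₀ : Measure Ω₀) [IsProbabilityMeasure P₀]
    (q : ℝ) (hq0 : 0 ≤ q) (hq1 : q < 1) (C : ℝ) (hC : 0 < C)
    (R R' : X → X → Ω₀ → X)
    (hRmeas : Measurable fun p : (X × X) × Ω₀ => R p.1.1 p.1.2 p.2)
    (hR'meas : Measurable fun p : (X × X) × Ω₀ => R' p.1.1 p.1.2 p.2)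
    (hRlaw : ∀ x x' : X, Measure.map (R x x') P₀ = κ x)
    (hR'law : ∀ x x' : X, Measure.map (R' x x') P₀ = κ x')
    (hcouple : ∀ x x' : X,
      P₀ {ω | q * dist x x' < dist (R x x' ω) (R' x x' ω)} ≤ ENNReal.ofReal (C * dist x x'))
    -- `P` is the countable product measure `P₀^{⊗ℕ}` on `Ω = Ω₀^ℕ`
    (P : Measure (ℕ → Ω₀)) [IsProbabilityMeasure P]
    (hP : ∀ n : ℕ, Measure.map (fun ω (i : Fin n) => ω i) P = Measure.pi fun _ : Fin n => P₀)
    (V : X → ℝ) (hV : Continuous V)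
    (x x' : X) (f : X → ℝ) (hf : Continuous f)
    (n : ℕ) (hn : 1 ≤ n) (k : ℕ) (hk : k ≤ n - 1) :
    |∫ ω in eventC R R' x x' q k,
        f (chain R R' x x' n ω).1
          * Real.exp (∑ i ∈ Finset.Icc 1 n, V (chain R R' x x' i ω).1) ∂P|
      ≤ C * Real.exp (⨆ y : X, V y) * supNorm f * supNorm (FKiter κ V (n - k - 1) 1)
          * supNorm (FKiter κ V k 1) * q ^ k * dist x x' :=
  bad_event_FK_estimate_general κ hκprob hFeller P₀ q hq0 C hC R R' hRmeas hR'meas hRlaw hcouple P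
    hP V hV x x' f hf n hn k hk
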